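/- Let A, B, R be intervals in ℝ (one-dimensional rectangular uncertainty regions) with R = [R_min, R_max]. Then for all a ∈ A, b ∈ B, r ∈ R it holds that |a - r| < |b - r|, if and only if max over r ∈ {R_min, R_max} of (MaxDist(A, r) - MinDist(B, r)) < 0, where MaxDist(A,r) = max_{a∈A} |a-r| and MinDist(B,r) = min_{b∈B} |b-r|. -/

import Mathlib

/-
The sign of `|a - r| - |b - r|` can change only once as `r` moves along the line: for fixed
`a ≤ b` this function is monotone in `r` (and antitone for `b ≤ a`). So the strict domination
`|a - r| < |b - r|` holds on all of `[rmin, rmax]` as soon as it holds at both endpoints.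
At a fixed `r`, domination for all pairs `a ∈ A`, `b ∈ B` is exactly `MaxDist A r < MinDist B r`,
because both extrema are attained on compact nonempty sets.
-/

/-- Maximum distance between a point `r` and a set `I ⊆ ℝ`. -/
noncomputable def MaxDist (I : Set ℝ) (r : ℝ) : ℝ := sSup ((fun x => |x - r|) '' I)

/-- Minimum distance between a point `r` and a set `I ⊆ ℝ`. -/
noncomputable def MinDist (I : Set ℝ) (r : ℝ) : ℝ := sInf ((fun x => |x - r|) '' I)

lemma monotone_abs_sub_sub_abs_sub {a b : ℝ} (hab : a ≤ b) :
    Monotone fun r : ℝ => |a - r| - |b - r| := by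
  intro r s hrs
  dsimp only
  rcases abs_cases (a - r) with ⟨h1, h1'⟩ | ⟨h1, h1'⟩ <;>
  rcases abs_cases (b - s) with ⟨h2, h2'⟩ | ⟨h2, h2'⟩ <;>
  rcases abs_cases (a - s) with ⟨h3, h3'⟩ | ⟨h3, h3'⟩ <;>
  rcases abs_cases (b - r) with ⟨h4, h4'⟩ | ⟨h4, h4'⟩ <;>
  linarith

lemma abs_sub_lt_abs_sub_of_mem_Icc {a b rmin rmax r : ℝ}
    (hmin : |a - rmin| < |b - rmin|) (hmax : |a - rmax| < |b - rmax|)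
    (hr : r ∈ Set.Icc rmin rmax) : |a - r| < |b - r| := by
  rcases le_total a b with hab | hba
  · have hmono : |a - r| - |b - r| ≤ |a - rmax| - |b - rmax| :=
      monotone_abs_sub_sub_abs_sub hab hr.2
    linarith
  · have hmono : |b - rmin| - |a - rmin| ≤ |b - r| - |a - r| :=
      monotone_abs_sub_sub_abs_sub hba hr.1
    linarith

section Extrema

variable {I : Set ℝ} {r : ℝ}

lemma IsCompact.image_abs_sub (hI : IsCompact I) (r : ℝ) :
    IsCompact ((fun x => |x - r|) '' I) :=
  hI.image (by fun_prop)

lemma abs_sub_le_maxDist (hI : IsCompact I) {x : ℝ} (hx : x ∈ I) : |x - r| ≤ MaxDist I r :=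
  le_csSup (hI.image_abs_sub r).bddAbove ⟨x, hx, rfl⟩

lemma minDist_le_abs_sub (hI : IsCompact I) {x : ℝ} (hx : x ∈ I) : MinDist I r ≤ |x - r| :=
  csInf_le (hI.image_abs_sub r).bddBelow ⟨x, hx, rfl⟩

lemma exists_abs_sub_eq_maxDist (hI : IsCompact I) (hne : I.Nonempty) :
    ∃ x ∈ I, |x - r| = MaxDist I r :=
  (hI.image_abs_sub r).sSup_mem (hne.image _)

lemma exists_abs_sub_eq_minDist (hI : IsCompact I) (hne : I.Nonempty) :
    ∃ x ∈ I, |x - r| = MinDist I r :=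
  (hI.image_abs_sub r).sInf_mem (hne.image _)

end Extrema

lemma maxDist_sub_minDist_neg_iff {A B : Set ℝ} (hA : IsCompact A) (hB : IsCompact B)
    (hA₀ : A.Nonempty) (hB₀ : B.Nonempty) (r : ℝ) :
    MaxDist A r - MinDist B r < 0 ↔ ∀ a ∈ A, ∀ b ∈ B, |a - r| < |b - r| := by
  constructor
  · intro h a ha b hb
    linarith [abs_sub_le_maxDist (r := r) hA ha, minDist_le_abs_sub (r := r) hB hb]
  · intro h
    obtain ⟨a, ha, ha_eq⟩ := exists_abs_sub_eq_maxDist (r := r) hA hA₀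
    obtain ⟨b, hb, hb_eq⟩ := exists_abs_sub_eq_minDist (r := r) hB hB₀
    linarith [h a ha b hb]

theorem stmt2 (a₁ a₂ b₁ b₂ rmin rmax : ℝ)
    (ha : a₁ ≤ a₂) (hb : b₁ ≤ b₂) (hr : rmin ≤ rmax) :
    (∀ a ∈ Set.Icc a₁ a₂, ∀ b ∈ Set.Icc b₁ b₂, ∀ r ∈ Set.Icc rmin rmax,
        |a - r| < |b - r|) ↔
      max (MaxDist (Set.Icc a₁ a₂) rmin - MinDist (Set.Icc b₁ b₂) rmin)
          (MaxDist (Set.Icc a₁ a₂) rmax - MinDist (Set.Icc b₁ b₂) rmax) < 0 := by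
  have hdist := maxDist_sub_minDist_neg_iff isCompact_Icc isCompact_Icc
    (Set.nonempty_Icc.2 ha) (Set.nonempty_Icc.2 hb)
  rw [max_lt_iff, hdist, hdist]
  constructor
  · intro h
    exact ⟨fun a haA b hbB => h a haA b hbB rmin ⟨le_rfl, hr⟩,
      fun a haA b hbB => h a haA b hbB rmax ⟨hr, le_rfl⟩⟩
  · rintro ⟨hmin, hmax⟩ a haA b hbB r hrR
    exact abs_sub_lt_abs_sub_of_mem_Icc (hmin a haA b hbB) (hmax a haA b hbB) hrR
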